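/- arXiv:2109.05599 — 3 statements merged into one kernel-verified Lean document; each statement's English description precedes it below -/
import Mathlib

section
/- (Message Meaning rule for shared keys, in DELP) If from context Γ one can derive the conjunction of 'agent i knows that k is a shared key between i and j' (i.e. K i (@key_k(i,j))) and 'agent i receives the message m encrypted under k' (i.e. [recv i] @({m}_k)), then from Γ one can derive 'agent i knows that agent j sent m' (i.e. K i ([send j] @m)). -/
inductive Message (σ : ℕ) : Type
  | null : Fin σ → Message σ
  | nonce : Message σ → Message σ
  | keys : Message σ → Message σ → Message σ → Message σ
  | encr : Message σ → Message σ → Message σ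
  | tupl : Message σ → Message σ → Message σ

inductive Program (σ : ℕ) : Type
  | skip : Program σ
  | secv : Program σ → Program σ → Program σ
  | reun : Program σ → Program σ → Program σ
  | send : Message σ → Program σ
  | recv : Message σ → Program σ

inductive Form (σ : ℕ) : Type
  | atom : Fin σ → Form σ
  | botm : Form σ
  | impl : Form σ → Form σ → Form σ
  | know : Message σ → Form σ → Form σ
  | prog : Program σ → Form σ → Form σ
  | mesg : Message σ → Form σ
  | and : Form σ → Form σ → Form σ
  | or : Form σ → Form σ → Form σ

abbrev Ctx (σ : ℕ) : Type := Set (Form σ)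

/-- The DELP deduction relation. -/
inductive Proof {σ : ℕ} : Ctx σ → Form σ → Prop
  | ax {Γ : Ctx σ} {p : Form σ} (h : p ∈ Γ) : Proof Γ p
  | andintro {Γ : Ctx σ} {p q : Form σ} : Proof Γ p → Proof Γ q → Proof Γ (p.and q)
  | andleft {Γ : Ctx σ} {p q : Form σ} : Proof Γ (p.and q) → Proof Γ p
  | andright {Γ : Ctx σ} {p q : Form σ} : Proof Γ (p.and q) → Proof Γ q
  | prtl {Γ : Ctx σ} {p q : Form σ} : Proof Γ ((p.and q).impl p)
  | prtr {Γ : Ctx σ} {p q : Form σ} : Proof Γ ((p.and q).impl q)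
  | kand {Γ : Ctx σ} {i : Message σ} {p q : Form σ} :
      Proof Γ (((Form.know i p).and (Form.know i q)).impl (Form.know i (p.and q)))
  | ktruth {Γ : Ctx σ} {i : Message σ} {φ : Form σ} :
      Proof Γ ((Form.know i φ).impl φ)
  | kdist {Γ : Ctx σ} {i : Message σ} {φ ψ : Form σ} :
      Proof Γ ((Form.know i (φ.impl ψ)).impl ((Form.know i φ).impl (Form.know i ψ)))
  | pdtruth {Γ : Ctx σ} {α : Program σ} {φ : Form σ} :
      Proof Γ ((Form.prog α φ).impl φ)
  | honesty {Γ : Ctx σ} {m k i j : Message σ} :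
      Proof Γ (((Form.mesg (Message.keys k i j)).and (Form.mesg (Message.encr m k))).impl
        (Form.prog (Program.send j) (Form.mesg m)))
  | knowreceive {Γ : Ctx σ} {m i : Message σ} :
      Proof Γ ((Form.prog (Program.recv i) (Form.mesg m)).impl (Form.know i (Form.mesg m)))
  | knowsend {Γ : Ctx σ} {m i : Message σ} :
      Proof Γ ((Form.prog (Program.send i) (Form.mesg m)).impl (Form.know i (Form.mesg m)))
  | knowreceivef {Γ : Ctx σ} {i : Message σ} {φ : Form σ} :
      Proof Γ ((Form.prog (Program.recv i) φ).impl (Form.know i φ))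
  | knowsendf {Γ : Ctx σ} {i : Message σ} {φ : Form σ} :
      Proof Γ ((Form.prog (Program.send i) φ).impl (Form.know i φ))
  | mp {Γ : Ctx σ} {p q : Form σ} : Proof Γ (p.impl q) → Proof Γ p → Proof Γ q
  | kgen {Γ : Ctx σ} {φ : Form σ} {i : Message σ} : Proof Γ φ → Proof Γ (Form.know i φ)
  | pdgen {Γ : Ctx σ} {φ : Form σ} {α : Program σ} : Proof Γ φ → Proof Γ (Form.prog α φ)

theorem message_meaning_shared_key {σ : ℕ} (Γ : Ctx σ) (m k i j : Message σ)
    (h : Proof Γ ((Form.know i (Form.mesg (Message.keys k i j))).and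
          (Form.prog (Program.recv i) (Form.mesg (Message.encr m k))))) :
    Proof Γ (Form.know i (Form.prog (Program.send j) (Form.mesg m))) := by
  have h1 := Proof.andleft h
  have h2 : Proof Γ (Form.know i (Form.mesg (Message.encr m k))) :=
    Proof.mp Proof.knowreceive (Proof.andright h)
  have h3 : Proof Γ (Form.know i ((Form.mesg (Message.keys k i j)).and (Form.mesg (Message.encr m k)))) :=
    Proof.mp Proof.kand (Proof.andintro h1 h2)
  have h4 := Proof.kgen (i := i) (Proof.honesty (Γ := Γ) (m := m) (k := k) (i := i) (j := j))
  exact Proof.mp (Proof.mp Proof.kdist h4) h3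
end

section
/- (A knows the session key in Needham–Schroeder) Under the Needham–Schroeder protocol axioms, for any context Γ and messages A, B, S, Na, Kab, Kas, Kbs one can derive Γ ⊢ K A @key_Kab(A,B), i.e. agent A knows that Kab is the shared key between A and B. -/
theorem A_knows_Kab {σ : ℕ} (Γ : Ctx σ) (A B S Na Kab Kas Kbs : Message σ)
    (hinit : Proof Γ (((Form.know A ((Form.mesg Na).and (Form.mesg (Message.keys Kas A S)))).and
        ((Form.know S ((Form.mesg (Message.keys Kas A S)).and
          ((Form.mesg (Message.keys Kbs B S)).and (Form.mesg (Message.keys Kab A B))))).and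
        (Form.know B (Form.mesg (Message.keys Kbs B S)))))))
    (hround1 : Proof Γ (Form.prog (Program.send A) (Form.prog (Program.recv S) (Form.mesg Na))))
    (hround2 : Proof Γ (Form.prog (Program.send S) (Form.prog (Program.recv A)
        ((Form.mesg (Message.encr Na Kas)).and
          ((Form.mesg (Message.encr (Message.keys Kab A B) Kas)).and
            (Form.mesg (Message.encr (Message.encr (Message.keys Kab A B) Kbs) Kas)))))))
    (hround3 : Proof Γ (Form.prog (Program.send A) (Form.prog (Program.recv B)
        (Form.mesg (Message.encr (Message.keys Kab A B) Kbs)))))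
    : Proof Γ (Form.know A (Form.mesg (Message.keys Kab A B))) := by
  -- knowledge modus ponens helper
  have kmp : ∀ {p q : Form σ}, Proof Γ (Form.know A (p.impl q)) →
      Proof Γ (Form.know A p) → Proof Γ (Form.know A q) :=
    fun hpq hp => Proof.mp (Proof.mp Proof.kdist hpq) hp
  -- A knows Kas(A,S)
  have hKAkas : Proof Γ (Form.know A (Form.mesg (Message.keys Kas A S))) :=
    kmp (Proof.kgen Proof.prtr) (Proof.andleft hinit)
  -- From round 2: A knows {Kab}_Kas
  have hrecv : Proof Γ (Form.know A
      ((Form.mesg (Message.encr Na Kas)).and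
        ((Form.mesg (Message.encr (Message.keys Kab A B) Kas)).and
          (Form.mesg (Message.encr (Message.encr (Message.keys Kab A B) Kbs) Kas))))) :=
    Proof.mp Proof.knowreceivef (Proof.mp Proof.pdtruth hround2)
  have hKAencr : Proof Γ (Form.know A (Form.mesg (Message.encr (Message.keys Kab A B) Kas))) :=
    kmp (Proof.kgen Proof.prtl) (kmp (Proof.kgen Proof.prtr) hrecv)
  -- combine and apply honesty under K A
  have hpair := Proof.mp Proof.kand (Proof.andintro hKAkas hKAencr)
  have hsend : Proof Γ (Form.know A
      (Form.prog (Program.send S) (Form.mesg (Message.keys Kab A B)))) :=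
    kmp (Proof.kgen Proof.honesty) hpair
  exact kmp (Proof.kgen Proof.pdtruth) hsend
end

section
/- (B knows the session key in Needham–Schroeder) Under the Needham–Schroeder protocol axioms, for any context Γ and messages A, B, S, Na, Kab, Kas, Kbs one can derive Γ ⊢ K B @key_Kab(A,B), i.e. agent B knows that Kab is the shared key between A and B. -/
theorem B_knows_Kab {σ : ℕ} (Γ : Ctx σ) (A B S Na Kab Kas Kbs : Message σ)
    (hinit : Proof Γ (((Form.know A ((Form.mesg Na).and (Form.mesg (Message.keys Kas A S)))).and
        ((Form.know S ((Form.mesg (Message.keys Kas A S)).and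
          ((Form.mesg (Message.keys Kbs B S)).and (Form.mesg (Message.keys Kab A B))))).and
        (Form.know B (Form.mesg (Message.keys Kbs B S)))))))
    (hround1 : Proof Γ (Form.prog (Program.send A) (Form.prog (Program.recv S) (Form.mesg Na))))
    (hround2 : Proof Γ (Form.prog (Program.send S) (Form.prog (Program.recv A)
        ((Form.mesg (Message.encr Na Kas)).and
          ((Form.mesg (Message.encr (Message.keys Kab A B) Kas)).and
            (Form.mesg (Message.encr (Message.encr (Message.keys Kab A B) Kbs) Kas)))))))
    (hround3 : Proof Γ (Form.prog (Program.send A) (Form.prog (Program.recv B)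
        (Form.mesg (Message.encr (Message.keys Kab A B) Kbs)))))
    : Proof Γ (Form.know B (Form.mesg (Message.keys Kab A B))) := by
  have h1 : Proof Γ (Form.prog (Program.recv B) (Form.mesg (Message.encr (Message.keys Kab A B) Kbs))) :=
    Proof.mp Proof.pdtruth hround3
  have h2 : Proof Γ (Form.mesg (Message.encr (Message.keys Kab A B) Kbs)) :=
    Proof.mp Proof.pdtruth h1
  have hk : Proof Γ (Form.mesg (Message.keys Kbs B S)) :=
    Proof.mp Proof.ktruth (Proof.andright (Proof.andright hinit))
  have hs : Proof Γ (Form.prog (Program.send S) (Form.mesg (Message.keys Kab A B))) :=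
    Proof.mp Proof.honesty (Proof.andintro hk h2)
  exact Proof.kgen (Proof.mp Proof.pdtruth hs)
end
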